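/- If R is a closed ∀⁺ type, then ⟦R⟧_γ is a partial equivalence relation (symmetric and transitive). -/
import Mathlib


namespace RelTT

/-- Untyped lambda terms (de Bruijn indices). -/
inductive Term : Type
  | var : ℕ → Term
  | lam : Term → Term
  | app : Term → Term → Term

namespace Term

/-- Lift free variables ≥ c by one. -/
def lift : Term → ℕ → Term
  | var k, c => if k < c then var k else var (k+1)
  | lam t, c => lam (lift t (c+1))
  | app t u, c => app (lift t c) (lift u c)

/-- Capture-avoiding substitution of `s` for variable `n`. -/
def subst : Term → ℕ → Term → Term
  | var k, n, s => if k = n then s else if n < k then var (k-1) else var k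
  | lam t, n, s => lam (subst t (n+1) (lift s 0))
  | app t u, n, s => app (subst t n s) (subst u n s)

end Term

/-- βη-equivalence of untyped lambda terms. -/
inductive Beq : Term → Term → Prop
  | beta (t u : Term) : Beq (Term.app (Term.lam t) u) (Term.subst t 0 u)
  | eta (t : Term) : Beq (Term.lam (Term.app (Term.lift t 0) (Term.var 0))) t
  | refl (t : Term) : Beq t t
  | symm {t u} : Beq t u → Beq u t
  | trans {t u v} : Beq t u → Beq u v → Beq t v
  | appCongr {t t' u u'} : Beq t t' → Beq u u' → Beq (Term.app t u) (Term.app t' u')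
  | lamCongr {t t'} : Beq t t' → Beq (Term.lam t) (Term.lam t')

/-- Binary relations on terms. -/
abbrev Rel := Term → Term → Prop

/-- A relation is βη-closed iff it respects βη-equivalence on both sides. -/
def BetaEtaClosed (r : Rel) : Prop :=
  ∀ t₁ t₂ t₁' t₂', r t₁ t₂ → Beq t₁' t₁ → Beq t₂' t₂ → r t₁' t₂'

/-- Relational types of RelTT (type variables are de Bruijn indices). -/
inductive Ty : Type
  | var : ℕ → Ty
  | arrow : Ty → Ty → Ty
  | all : Ty → Ty
  | conv : Ty → Ty
  | comp : Ty → Ty → Ty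
  | prom : Term → Ty

/-- Environments map type variables to relations. -/
abbrev Env := ℕ → Rel

def Env.cons (r : Rel) (γ : Env) : Env
  | 0 => r
  | n+1 => γ n

/-- The relational semantics of types. -/
def interp : Ty → Env → Rel
  | Ty.var n, γ => γ n
  | Ty.arrow R R', γ => fun t t' =>
      ∀ a a', interp R γ a a' → interp R' γ (Term.app t a) (Term.app t' a')
  | Ty.all R, γ => fun t t' =>
      ∀ r : Rel, BetaEtaClosed r → interp R (Env.cons r γ) t t'
  | Ty.conv R, γ => fun t t' => interp R γ t' t
  | Ty.comp R R', γ => fun t t' => ∃ u, interp R γ t u ∧ interp R' γ u t'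
  | Ty.prom tm, γ => fun t t' => Beq (Term.app tm t) t'

/-- All relations in the environment are βη-closed. -/
def EnvClosed (γ : Env) : Prop := ∀ n, BetaEtaClosed (γ n)

def I : Term := Term.lam (Term.var 0)
def K : Term := Term.lam (Term.lam (Term.var 1))

/-- Polarities. -/
inductive Pol | pos | neg

/-- The opposite polarity. -/
def Pol.flip : Pol → Pol
  | .pos => .neg
  | .neg => .pos

/-- The ∀ᵖ classes of types: ∀⁺ (p = pos) and ∀⁻ (p = neg). -/
inductive Foral : Pol → Ty → Prop
  | var (p n) : Foral p (Ty.var n)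
  | arrow {p R R'} : Foral p.flip R → Foral p R' → Foral p (Ty.arrow R R')
  | all {R} : Foral .pos R → Foral .pos (Ty.all R)
  | conv {p R} : Foral p R → Foral p (Ty.conv R)
  | prom (p) {t} : Beq t I → Foral p (Ty.prom t)

/-- All free type variables of R are < n. -/
def ClosedUnder : Ty → ℕ → Prop
  | Ty.var k, n => k < n
  | Ty.arrow R R', n => ClosedUnder R n ∧ ClosedUnder R' n
  | Ty.all R, n => ClosedUnder R (n+1)
  | Ty.conv R, n => ClosedUnder R n
  | Ty.comp R R', n => ClosedUnder R n ∧ ClosedUnder R' n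
  | Ty.prom _, _ => True

/-! ### Auxiliary de Bruijn metatheory -/

namespace Term

theorem lift_lift (t : Term) : ∀ c c', c' ≤ c → (t.lift c).lift c' = (t.lift c').lift (c+1) := by
  induction t with
  | var k =>
      intro c c' h
      simp only [lift]
      split_ifs <;> simp only [lift] <;> split_ifs <;>
        first | rfl | (simp only [var.injEq]; omega) | omega
  | lam t ih =>
      intro c c' h
      simp only [lift, ih (c+1) (c'+1) (by omega)]
  | app t u iht ihu =>
      intro c c' h
      simp only [lift, iht _ _ h, ihu _ _ h]

theorem lift_subst (t : Term) : ∀ c n s, c ≤ n →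
    (t.lift c).subst (n+1) (s.lift c) = (t.subst n s).lift c := by
  induction t with
  | var k =>
      intro c n s h
      simp only [lift, subst]
      split_ifs <;> simp only [lift, subst] <;> split_ifs <;>
        first | rfl | (simp only [var.injEq]; omega) | omega
  | lam t ih =>
      intro c n s h
      simp only [lift, subst]
      rw [lift_lift s c 0 (by omega), ih (c+1) (n+1) (s.lift 0) (by omega)]
  | app t u iht ihu =>
      intro c n s h
      simp only [lift, subst, iht _ _ _ h, ihu _ _ _ h]

theorem subst_lift (t : Term) : ∀ n c u, n ≤ c →
    (t.subst n u).lift c = (t.lift (c+1)).subst n (u.lift c) := by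
  induction t with
  | var k =>
      intro n c u h
      simp only [lift, subst]
      split_ifs <;> simp only [lift, subst] <;> split_ifs <;>
        first | rfl | (simp only [var.injEq]; omega) | omega
  | lam t ih =>
      intro n c u h
      simp only [lift, subst]
      rw [ih (n+1) (c+1) (u.lift 0) (by omega), lift_lift u c 0 (by omega)]
  | app t u iht ihu =>
      intro n c u h
      simp only [lift, subst, iht _ _ _ h, ihu _ _ _ h]

theorem subst_lift_cancel (s : Term) : ∀ c x, (s.lift c).subst c x = s := by
  induction s with
  | var k =>
      intro c x
      simp only [lift]
      split_ifs <;> simp only [subst] <;> split_ifs <;>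
        first | rfl | (simp only [var.injEq]; omega) | omega
  | lam t ih =>
      intro c x
      simp only [lift, subst, ih]
  | app t u iht ihu =>
      intro c x
      simp only [lift, subst, iht, ihu]

theorem subst_subst (t : Term) : ∀ m n u s, m ≤ n →
    (t.subst m u).subst n s = (t.subst (n+1) (s.lift m)).subst m (u.subst n s) := by
  induction t with
  | var k =>
      intro m n u s h
      simp only [subst]
      split_ifs <;> (try simp only [subst]) <;> (try split_ifs) <;>
        first
        | rfl
        | (simp only [var.injEq]; omega)
        | omega
        | (rw [subst_lift_cancel])
  | lam t ih =>
      intro m n u s h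
      simp only [subst]
      rw [ih (m+1) (n+1) (u.lift 0) (s.lift 0) (by omega),
        lift_lift s m 0 (by omega), lift_subst u 0 n s (by omega)]
  | app t u iht ihu =>
      intro m n u s h
      simp only [subst, iht _ _ _ _ h, ihu _ _ _ _ h]

/-- All free variables of a term are < n. -/
def Bounded : Term → ℕ → Prop
  | var k, n => k < n
  | lam t, n => Bounded t (n+1)
  | app t u, n => Bounded t n ∧ Bounded u n

theorem Bounded.mono : ∀ {t m n}, m ≤ n → Bounded t m → Bounded t n := by
  intro t
  induction t with
  | var k => intro m n h hb; simp only [Bounded] at *; omega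
  | lam t ih => intro m n h hb; exact ih (by omega) hb
  | app t u iht ihu => intro m n h hb; exact ⟨iht h hb.1, ihu h hb.2⟩

theorem exists_bounded (t : Term) : ∃ n, Bounded t n := by
  induction t with
  | var k => exact ⟨k+1, by simp [Bounded]⟩
  | lam t ih =>
      obtain ⟨n, hn⟩ := ih
      exact ⟨n, show Bounded t (n+1) from Bounded.mono (Nat.le_succ n) hn⟩
  | app t u iht ihu =>
      obtain ⟨n, hn⟩ := iht
      obtain ⟨m, hm⟩ := ihu
      exact ⟨max n m, show Bounded t (max n m) ∧ Bounded u (max n m) from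
        ⟨Bounded.mono (le_max_left _ _) hn, Bounded.mono (le_max_right _ _) hm⟩⟩

theorem Bounded.lift : ∀ {t n} (c : ℕ), Bounded t n → Bounded (t.lift c) (n+1) := by
  intro t
  induction t with
  | var k =>
      intro n c hb
      simp only [Term.lift]
      split_ifs <;> simp only [Bounded] at * <;> omega
  | lam t ih =>
      intro n c hb
      exact ih (c+1) hb
  | app t u iht ihu =>
      intro n c hb
      exact ⟨iht c hb.1, ihu c hb.2⟩

theorem subst_of_bounded : ∀ {t n} m s, Bounded t n → n ≤ m → t.subst m s = t := by
  intro t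
  induction t with
  | var k =>
      intro n m s hb h
      simp only [Bounded] at hb
      simp only [subst]
      split_ifs <;> first | omega | rfl
  | lam t ih =>
      intro n m s hb h
      simp only [subst, ih (m+1) (s.lift 0) hb (by omega)]
  | app t u iht ihu =>
      intro n m s hb h
      simp only [subst, iht m s hb.1 h, ihu m s hb.2 h]

end Term

theorem Beq.lift {t u : Term} (h : Beq t u) : ∀ c, Beq (t.lift c) (u.lift c) := by
  induction h with
  | beta t u =>
      intro c
      have := Beq.beta (t.lift (c+1)) (u.lift c)
      simpa only [Term.lift, Term.subst_lift t 0 c u (by omega)] using this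
  | eta t =>
      intro c
      have := Beq.eta (t.lift c)
      simp only [Term.lift]
      rw [if_pos (by omega : 0 < c + 1), ← Term.lift_lift t c 0 (by omega)]
      exact this
  | refl t => intro c; exact Beq.refl _
  | symm _ ih => intro c; exact (ih c).symm
  | trans _ _ ih₁ ih₂ => intro c; exact (ih₁ c).trans (ih₂ c)
  | appCongr _ _ ih₁ ih₂ => intro c; exact Beq.appCongr (ih₁ c) (ih₂ c)
  | lamCongr _ ih => intro c; exact Beq.lamCongr (ih (c+1))

theorem Beq.substLeft {t u : Term} (h : Beq t u) : ∀ n s, Beq (t.subst n s) (u.subst n s) := by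
  induction h with
  | beta t u =>
      intro n s
      have := Beq.beta (t.subst (n+1) (s.lift 0)) (u.subst n s)
      simpa only [Term.subst, Term.subst_subst t 0 n u s (by omega)] using this
  | eta t =>
      intro n s
      have := Beq.eta (t.subst n s)
      simp only [Term.subst]
      rw [if_neg (by omega : ¬ (0 = n + 1)), if_neg (by omega : ¬ (n + 1 < 0)),
        Term.lift_subst t 0 n s (by omega)]
      exact this
  | refl t => intro n s; exact Beq.refl _
  | symm _ ih => intro n s; exact (ih n s).symm
  | trans _ _ ih₁ ih₂ => intro n s; exact (ih₁ n s).trans (ih₂ n s)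
  | appCongr _ _ ih₁ ih₂ => intro n s; exact Beq.appCongr (ih₁ n s) (ih₂ n s)
  | lamCongr _ ih => intro n s; exact Beq.lamCongr (ih (n+1) (s.lift 0))

/-- Fresh-variable extensionality: if `var n` is fresh for `f` and `f'` and
`f (var n) =βη f' (var n)`, then `f =βη f'`. -/
theorem beq_of_fresh_app {f f' : Term} {n : ℕ}
    (hb : Term.Bounded f n) (hb' : Term.Bounded f' n)
    (h : Beq (Term.app f (Term.var n)) (Term.app f' (Term.var n))) : Beq f f' := by
  have h1 := h.lift 0
  simp only [Term.lift] at h1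
  rw [if_neg (by omega)] at h1
  have h2 := h1.substLeft (n+1) (Term.var 0)
  simp only [Term.subst] at h2
  rw [Term.subst_of_bounded (n+1) (Term.var 0) (hb.lift 0) le_rfl,
      Term.subst_of_bounded (n+1) (Term.var 0) (hb'.lift 0) le_rfl] at h2
  simp only [ite_true] at h2
  exact ((Beq.eta f).symm.trans (Beq.lamCongr h2)).trans (Beq.eta f')

theorem beq_betaEtaClosed : BetaEtaClosed Beq :=
  fun _ _ _ _ h h1 h2 => h1.trans (h.trans h2.symm)

/-- Interpretations in βη-closed environments are βη-closed. -/
theorem interp_betaEtaClosed (R : Ty) : ∀ γ : Env, EnvClosed γ → BetaEtaClosed (interp R γ) := by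
  induction R with
  | var n => intro γ hγ; exact hγ n
  | arrow R R' ihR ihR' =>
      intro γ hγ t₁ t₂ t₁' t₂' h h1 h2 a a' ha
      exact ihR' γ hγ _ _ _ _ (h a a' ha) (Beq.appCongr h1 (Beq.refl a))
        (Beq.appCongr h2 (Beq.refl a'))
  | all R ih =>
      intro γ hγ t₁ t₂ t₁' t₂' h h1 h2 r hr
      exact ih (Env.cons r γ) (fun n => by cases n with | zero => exact hr | succ n => exact hγ n)
        _ _ _ _ (h r hr) h1 h2
  | conv R ih =>
      intro γ hγ t₁ t₂ t₁' t₂' h h1 h2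
      exact ih γ hγ _ _ _ _ h h2 h1
  | comp R R' ihR ihR' =>
      intro γ hγ t₁ t₂ t₁' t₂' h h1 h2
      obtain ⟨u, hu1, hu2⟩ := h
      exact ⟨u, ihR γ hγ _ _ _ _ hu1 h1 (Beq.refl u), ihR' γ hγ _ _ _ _ hu2 (Beq.refl u) h2⟩
  | prom tm =>
      intro γ hγ t₁ t₂ t₁' t₂' h h1 h2
      exact ((Beq.appCongr (Beq.refl tm) h1).trans h).trans h2.symm

/-- Interpretation only depends on the free type variables. -/
theorem interp_ext (R : Ty) : ∀ (n : ℕ) (γ δ : Env), ClosedUnder R n →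
    (∀ k, k < n → γ k = δ k) → ∀ t t', interp R γ t t' ↔ interp R δ t t' := by
  induction R with
  | var m => intro n γ δ hc hagree t t'; rw [interp, interp, hagree m hc]
  | arrow R R' ihR ihR' =>
      intro n γ δ hc hagree t t'
      simp only [interp]
      constructor <;> intro h a a' ha
      · exact (ihR' n γ δ hc.2 hagree _ _).mp (h a a' ((ihR n γ δ hc.1 hagree _ _).mpr ha))
      · exact (ihR' n γ δ hc.2 hagree _ _).mpr (h a a' ((ihR n γ δ hc.1 hagree _ _).mp ha))
  | all R ih =>
      intro n γ δ hc hagree t t'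
      simp only [interp]
      constructor <;> intro h r hr
      · exact (ih (n+1) (Env.cons r γ) (Env.cons r δ) hc
          (fun k hk => by cases k with | zero => rfl | succ k => exact hagree k (by omega)) _ _).mp
          (h r hr)
      · exact (ih (n+1) (Env.cons r γ) (Env.cons r δ) hc
          (fun k hk => by cases k with | zero => rfl | succ k => exact hagree k (by omega)) _ _).mpr
          (h r hr)
  | conv R ih =>
      intro n γ δ hc hagree t t'
      exact ih n γ δ hc hagree t' t
  | comp R R' ihR ihR' =>
      intro n γ δ hc hagree t t'
      simp only [interp]
      constructor <;> rintro ⟨u, hu1, hu2⟩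
      · exact ⟨u, (ihR n γ δ hc.1 hagree _ _).mp hu1, (ihR' n γ δ hc.2 hagree _ _).mp hu2⟩
      · exact ⟨u, (ihR n γ δ hc.1 hagree _ _).mpr hu1, (ihR' n γ δ hc.2 hagree _ _).mpr hu2⟩
  | prom tm => intro n γ δ hc hagree t t'; exact Iff.rfl

/-- The identity environment mapping every type variable to βη-equivalence. -/
def idEnv : Env := fun _ => Beq

theorem idEnv_closed : EnvClosed idEnv := fun _ => beq_betaEtaClosed

theorem cons_beq_idEnv : Env.cons Beq idEnv = idEnv := by
  funext n
  cases n <;> rfl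

theorem beq_app_I (t tm : Term) (htm : Beq tm I) : Beq (Term.app tm t) t := by
  have h1 : Beq (Term.app tm t) (Term.app I t) := Beq.appCongr htm (Beq.refl t)
  have h2 := Beq.beta (Term.var 0) t
  simp only [Term.subst, if_pos rfl] at h2
  exact h1.trans h2

/-- Identity inclusion (both polarities). -/
theorem identity_inclusion {p : Pol} {R : Ty} (h : Foral p R) :
    ∀ t t', (p = .pos → interp R idEnv t t' → Beq t t') ∧
            (p = .neg → Beq t t' → interp R idEnv t t') := by
  induction h with
  | var p n =>
      intro t t'
      exact ⟨fun _ h => h, fun _ h => h⟩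
  | @arrow p R R' hR hR' ihR ihR' =>
      intro t t'
      constructor
      · rintro rfl h
        obtain ⟨n₁, hb₁⟩ := t.exists_bounded
        obtain ⟨n₂, hb₂⟩ := t'.exists_bounded
        set n := max n₁ n₂ with hn
        have hvar : interp R idEnv (Term.var n) (Term.var n) :=
          (ihR _ _).2 rfl (Beq.refl _)
        have happ := h (Term.var n) (Term.var n) hvar
        have hbeq := (ihR' _ _).1 rfl happ
        exact beq_of_fresh_app (hb₁.mono (le_max_left _ _)) (hb₂.mono (le_max_right _ _)) hbeq
      · rintro rfl h a a' ha
        have hbeq : Beq a a' := (ihR _ _).1 rfl ha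
        exact (ihR' _ _).2 rfl (Beq.appCongr h hbeq)
  | @all R hR ih =>
      intro t t'
      refine ⟨fun _ h => ?_, fun h => by cases h⟩
      have := h Beq beq_betaEtaClosed
      rw [cons_beq_idEnv] at this
      exact (ih t t').1 rfl this
  | @conv p R hR ih =>
      intro t t'
      constructor
      · rintro rfl h
        exact ((ih t' t).1 rfl h).symm
      · rintro rfl h
        exact (ih t' t).2 rfl h.symm
  | @prom p tm htm =>
      intro t t'
      constructor
      · rintro rfl h
        exact (beq_app_I t tm htm).symm.trans h
      · rintro rfl h
        exact (beq_app_I t tm htm).trans h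

/-- If R is a closed ∀⁺ type, then ⟦R⟧_γ is a partial equivalence relation. -/
theorem forall_pos_per (R : Ty) (hR : Foral .pos R) (hc : ClosedUnder R 0)
    (γ : Env) (hγ : EnvClosed γ) :
    (∀ t t', interp R γ t t' → interp R γ t' t) ∧
    (∀ x y z, interp R γ x y → interp R γ y z → interp R γ x z) := by
  have hext : ∀ t t', interp R γ t t' ↔ interp R idEnv t t' :=
    interp_ext R 0 γ idEnv hc (fun k hk => by omega)
  have hid : ∀ t t', interp R γ t t' → Beq t t' := fun t t' h =>
    (identity_inclusion hR t t').1 rfl ((hext t t').mp h)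
  have hcl : BetaEtaClosed (interp R γ) := interp_betaEtaClosed R γ hγ
  constructor
  · intro t t' h
    exact hcl t t' t' t h (hid t t' h).symm (hid t t' h)
  · intro x y z hxy hyz
    exact hcl x y x z hxy (Beq.refl x) (hid y z hyz).symm

end RelTT
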